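/- arXiv:1609.05356 — 5 statements merged into one kernel-verified Lean document; each statement's English description precedes it below -/
import Mathlib

section
/- Let 𝕏 be a perfect compact metric space, f:𝕏→𝕏 a Borel measurable map, and μ an f-invariant finite Borel measure on 𝕏. Then η_x is a probability measure, i.e. η_x(𝕏)=1, for μ-almost every x∈𝕏. -/
open MeasureTheory Filter Set Topology
open scoped ENNReal

/-- The premeasure `τ_x(A) = limsup_n (1/n) ∑_{j<n} 1_A(f^j x)`. -/
noncomputable def tauOrbit {X : Type*} (f : X → X) (x : X) (A : Set X) : ℝ≥0∞ :=
  Filter.atTop.limsup fun n : ℕ =>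
    (∑ j ∈ Finset.range n, A.indicator (fun _ => (1 : ℝ≥0∞)) (f^[j] x)) / (n : ℝ≥0∞)

/-- `ν_r(Y)`: infimum of `∑_i τ_x(I_i)` over countable covers of `Y` by open sets of
diameter at most `r`. -/
noncomputable def nuAux {X : Type*} [MetricSpace X] (f : X → X) (x : X) (r : ℝ)
    (Y : Set X) : ℝ≥0∞ :=
  ⨅ (I : ℕ → Set X) (_ : Y ⊆ ⋃ n, I n) (_ : ∀ n, IsOpen (I n))
    (_ : ∀ n, EMetric.diam (I n) ≤ ENNReal.ofReal r), ∑' n, tauOrbit f x (I n)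

/-- `ν(Y) = sup_{r>0} ν_r(Y)`, the Carathéodory Method II construction from `τ_x`. -/
noncomputable def nuFun {X : Type*} [MetricSpace X] (f : X → X) (x : X) (Y : Set X) : ℝ≥0∞ :=
  ⨆ (r : ℝ) (_ : 0 < r), nuAux f x r Y

/-!
`τ_x(A)` is the upper Birkhoff average of `1_A` along the orbit of `x`. For every `x`, `ν(𝕏) ≥ 1`:
a finite subcover of an open cover catches every point of the orbit, and upper Birkhoff averages
are subadditive. Conversely, for an invariant measure the integral of an upper Birkhoff average
never exceeds the integral of the function (a stopping-time argument in the style of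
Katznelson–Weiss). Integrating `∑ₙ τ_x(Iₙ)` over open covers of small diameter with `∑ₙ μ(Iₙ)`
close to `μ(𝕏)` gives a function `H ≥ 1` with `∫ H dμ ≤ μ(𝕏)`, so `H = 1` and hence `ν_r(𝕏) ≤ 1`
almost everywhere.
-/

theorem ENNReal.limsup_add_le_add {ι : Type*} {l : Filter ι} (u v : ι → ℝ≥0∞) :
    limsup (u + v) l ≤ limsup u l + limsup v l := by
  refine le_of_forall_gt fun c hc => ?_
  obtain ⟨a, ha, b, hb, hab⟩ := ENNReal.exists_add_lt_of_add_lt hc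
  refine (limsup_le_of_le (by isBoundedDefault) ?_).trans_lt hab
  filter_upwards [eventually_lt_of_limsup_lt ha, eventually_lt_of_limsup_lt hb] with n hu hv
  exact add_le_add hu.le hv.le

theorem limsup_div_nat_le_of_le_add_one {a b : ℕ → ℝ≥0∞} (hab : ∀ n, a n ≤ b n + 1) :
    limsup (fun n : ℕ => a n / n) atTop ≤ limsup (fun n : ℕ => b n / n) atTop := by
  have hinv : limsup (fun n : ℕ => (n : ℝ≥0∞)⁻¹) atTop = 0 :=
    ENNReal.tendsto_inv_nat_nhds_zero.limsup_eq
  calc limsup (fun n : ℕ => a n / n) atTop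
      ≤ limsup ((fun n : ℕ => b n / n) + fun n : ℕ => (n : ℝ≥0∞)⁻¹) atTop :=
        limsup_le_limsup (Eventually.of_forall fun n => by
          simpa only [Pi.add_apply, ENNReal.add_div, one_div] using
            ENNReal.div_le_div_right (hab n) n)
    _ ≤ limsup (fun n : ℕ => b n / n) atTop + 0 := hinv ▸ ENNReal.limsup_add_le_add _ _
    _ = limsup (fun n : ℕ => b n / n) atTop := add_zero _

theorem ENNReal.le_of_forall_nat_mul_le_mul_add {a b C : ℝ≥0∞} (hC : C ≠ ∞)
    (h : ∀ N : ℕ, N * a ≤ N * b + C) : a ≤ b := by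
  have hlim : Tendsto (fun N : ℕ => b + C * (N : ℝ≥0∞)⁻¹) atTop (𝓝 (b + C * 0)) :=
    tendsto_const_nhds.add (ENNReal.Tendsto.const_mul ENNReal.tendsto_inv_nat_nhds_zero (Or.inr hC))
  rw [mul_zero, add_zero] at hlim
  refine ge_of_tendsto hlim (eventually_atTop.2 ⟨1, fun N hN => ?_⟩)
  have hN0 : (N : ℝ≥0∞) ≠ 0 := Nat.cast_ne_zero.2 (by omega)
  rw [← ENNReal.mul_le_mul_iff_right hN0 (natCast_ne_top N), mul_add, mul_left_comm,
    ENNReal.mul_inv_cancel hN0 (natCast_ne_top N), mul_one]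
  exact h N

section UpperBirkhoffAverage

variable {X : Type*} {f : X → X} {g h : X → ℝ≥0∞}

noncomputable def upperBirkhoffAverage (f : X → X) (g : X → ℝ≥0∞) (x : X) : ℝ≥0∞ :=
  limsup (fun n : ℕ => birkhoffSum f g n x / n) atTop

theorem tauOrbit_eq_upperBirkhoffAverage (f : X → X) (x : X) (A : Set X) :
    tauOrbit f x A = upperBirkhoffAverage f (A.indicator 1) x := rfl

theorem upperBirkhoffAverage_mono (hgh : g ≤ h) (x : X) :
    upperBirkhoffAverage f g x ≤ upperBirkhoffAverage f h x :=
  limsup_le_limsup (Eventually.of_forall fun _ =>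
    ENNReal.div_le_div_right (Finset.sum_le_sum fun _ _ => hgh _) _)

theorem upperBirkhoffAverage_add_le (x : X) :
    upperBirkhoffAverage f (g + h) x ≤ upperBirkhoffAverage f g x + upperBirkhoffAverage f h x := by
  unfold upperBirkhoffAverage
  simp_rw [birkhoffSum_add', ENNReal.add_div]
  exact ENNReal.limsup_add_le_add _ _

theorem upperBirkhoffAverage_zero (f : X → X) (x : X) : upperBirkhoffAverage f 0 x = 0 := by
  simp [upperBirkhoffAverage, birkhoffSum]

theorem upperBirkhoffAverage_one (f : X → X) (x : X) : upperBirkhoffAverage f 1 x = 1 := by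
  refine Tendsto.limsup_eq (tendsto_const_nhds.congr' ?_)
  filter_upwards [eventually_ne_atTop 0] with n hn
  simp [birkhoffSum, ENNReal.div_self (Nat.cast_ne_zero.2 hn) (ENNReal.natCast_ne_top n)]

theorem upperBirkhoffAverage_le_one (hg : g ≤ 1) (x : X) : upperBirkhoffAverage f g x ≤ 1 :=
  (upperBirkhoffAverage_mono hg x).trans_eq (upperBirkhoffAverage_one f x)

theorem upperBirkhoffAverage_comp_self (hg : g ≤ 1) :
    upperBirkhoffAverage f g ∘ f = upperBirkhoffAverage f g := by
  ext x
  have h₁ (n : ℕ) : birkhoffSum f g n (f x) ≤ birkhoffSum f g n x + 1 :=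
    calc birkhoffSum f g n (f x) ≤ g x + birkhoffSum f g n (f x) := le_add_self
      _ = birkhoffSum f g n x + g (f^[n] x) := by rw [← birkhoffSum_succ', birkhoffSum_succ]
      _ ≤ birkhoffSum f g n x + 1 := by gcongr; exact hg _
  have h₂ (n : ℕ) : birkhoffSum f g n x ≤ birkhoffSum f g n (f x) + 1 :=
    calc birkhoffSum f g n x ≤ birkhoffSum f g n x + g (f^[n] x) := le_self_add
      _ = birkhoffSum f g n (f x) + g x := by
          rw [← birkhoffSum_succ, birkhoffSum_succ', add_comm]
      _ ≤ birkhoffSum f g n (f x) + 1 := by gcongr; exact hg _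
  exact le_antisymm (limsup_div_nat_le_of_le_add_one h₁) (limsup_div_nat_le_of_le_add_one h₂)

/-- Chaining stopping times along the orbit loses at most the last `M` steps. -/
theorem nat_mul_le_birkhoffSum_add {c : X → ℝ≥0∞} {M : ℕ} (hc : c ∘ f = c)
    (hstop : ∀ x, ∃ n, 1 ≤ n ∧ n ≤ M ∧ n * c x ≤ birkhoffSum f g n x) (N : ℕ) (x : X) :
    N * c x ≤ birkhoffSum f g N x + M * c x := by
  induction N using Nat.strong_induction_on generalizing x with
  | _ N ih =>
  rcases le_or_gt N M with hNM | hMN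
  · exact le_add_left (by gcongr)
  obtain ⟨n, hn1, hnM, hn⟩ := hstop x
  obtain ⟨m, rfl⟩ : ∃ m, N = n + m := ⟨N - n, by omega⟩
  have hcn : c (f^[n] x) = c x := congrFun (Function.iterate_invariant hc n) x
  calc ((n + m : ℕ) : ℝ≥0∞) * c x = n * c x + m * c (f^[n] x) := by rw [hcn]; push_cast; ring
    _ ≤ birkhoffSum f g n x + (birkhoffSum f g m (f^[n] x) + M * c (f^[n] x)) :=
        add_le_add hn (ih m (by omega) _)
    _ = birkhoffSum f g (n + m) x + M * c x := by rw [birkhoffSum_add, hcn, add_assoc]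

variable [MeasurableSpace X]

theorem measurable_birkhoffSum (hf : Measurable f) (hg : Measurable g) (n : ℕ) :
    Measurable (birkhoffSum f g n) :=
  Finset.measurable_sum _ fun k _ => hg.comp (hf.iterate k)

theorem measurable_upperBirkhoffAverage (hf : Measurable f) (hg : Measurable g) :
    Measurable (upperBirkhoffAverage f g) :=
  Measurable.limsup fun n => (measurable_birkhoffSum hf hg n).div_const _

variable {μ : Measure X}

theorem MeasureTheory.MeasurePreserving.lintegral_birkhoffSum (hf : MeasurePreserving f μ μ)
    (hg : Measurable g) (n : ℕ) : ∫⁻ x, birkhoffSum f g n x ∂μ = n * ∫⁻ x, g x ∂μ := by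
  simp only [birkhoffSum]
  rw [lintegral_finsetSum (f := fun k x => g (f^[k] x)) _
      fun k _ => hg.comp (hf.measurable.iterate k),
    Finset.sum_congr rfl fun k _ => (hf.iterate k).lintegral_comp hg]
  simp

theorem lintegral_le_add_measure_of_forall_notMem_exists_nat_mul_le_birkhoffSum
    [IsFiniteMeasure μ] (hf : MeasurePreserving f μ μ) (hg : Measurable g) {c : X → ℝ≥0∞}
    (hcm : Measurable c) (hc : c ∘ f = c) (hc1 : c ≤ 1) {E : Set X} (hE : MeasurableSet E)
    {M : ℕ} (hstop : ∀ x ∉ E, ∃ n, 1 ≤ n ∧ n ≤ M ∧ n * c x ≤ birkhoffSum f g n x) :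
    ∫⁻ x, c x ∂μ ≤ ∫⁻ x, g x ∂μ + μ E := by
  -- Points of `E` are made to stop at once by adding `1_E` to `g`.
  set g' := g + E.indicator 1
  have hstop' (x : X) : ∃ n, 1 ≤ n ∧ n ≤ M + 1 ∧ n * c x ≤ birkhoffSum f g' n x := by
    by_cases hx : x ∈ E
    · refine ⟨1, le_rfl, by omega, ?_⟩
      simpa [g', birkhoffSum_one, hx] using (hc1 x).trans le_add_self
    · obtain ⟨n, hn1, hnM, hn⟩ := hstop x hx
      exact ⟨n, hn1, by omega, hn.trans (Finset.sum_le_sum fun _ _ => le_self_add)⟩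
  have hg'm : Measurable g' := hg.add (measurable_one.indicator hE)
  have hg' : ∫⁻ x, g' x ∂μ = ∫⁻ x, g x ∂μ + μ E := by
    simp only [g', Pi.add_apply]
    rw [lintegral_add_left hg, lintegral_indicator_one hE]
  refine ENNReal.le_of_forall_nat_mul_le_mul_add (C := (M + 1 : ℕ) * ∫⁻ x, c x ∂μ)
    (ENNReal.mul_ne_top (ENNReal.natCast_ne_top _)
      ((lintegral_mono hc1).trans_lt (by simp [measure_lt_top])).ne) fun N => ?_
  calc (N : ℝ≥0∞) * ∫⁻ x, c x ∂μ = ∫⁻ x, N * c x ∂μ := (lintegral_const_mul _ hcm).symm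
    _ ≤ ∫⁻ x, (birkhoffSum f g' N x + (M + 1 : ℕ) * c x) ∂μ :=
        lintegral_mono (nat_mul_le_birkhoffSum_add hc hstop' N)
    _ = N * (∫⁻ x, g x ∂μ + μ E) + (M + 1 : ℕ) * ∫⁻ x, c x ∂μ := by
        rw [lintegral_add_right _ (hcm.const_mul _), hf.lintegral_birkhoffSum hg'm, hg',
          lintegral_const_mul _ hcm]

theorem lintegral_le_of_forall_exists_nat_mul_le_birkhoffSum [IsFiniteMeasure μ]
    (hf : MeasurePreserving f μ μ) (hg : Measurable g) {c : X → ℝ≥0∞} (hcm : Measurable c)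
    (hc : c ∘ f = c) (hc1 : c ≤ 1) (hstop : ∀ x, ∃ n, 1 ≤ n ∧ n * c x ≤ birkhoffSum f g n x) :
    ∫⁻ x, c x ∂μ ≤ ∫⁻ x, g x ∂μ := by
  set E : ℕ → Set X := fun M => {x | ∀ n, 1 ≤ n → n ≤ M → birkhoffSum f g n x < n * c x}
  have hEm (M : ℕ) : MeasurableSet (E M) := by
    simp only [E, ofPred_forall]
    exact .iInter fun n => .iInter fun _ => .iInter fun _ =>
      measurableSet_lt (measurable_birkhoffSum hf.measurable hg n) (measurable_const.mul hcm)
  have hE_anti : Antitone E := fun M M' hMM' x hx n hn1 hnM => hx n hn1 (hnM.trans hMM')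
  have hE_empty : ⋂ M, E M = ∅ := by
    refine eq_empty_iff_forall_notMem.2 fun x hx => ?_
    obtain ⟨n, hn1, hn⟩ := hstop x
    exact (hn.trans_lt (mem_iInter.1 hx n n hn1 le_rfl)).false
  have hE_lim : Tendsto (μ ∘ E) atTop (𝓝 0) := by
    simpa [hE_empty] using tendsto_measure_iInter_atTop (fun M => (hEm M).nullMeasurableSet)
      hE_anti ⟨0, measure_ne_top μ _⟩
  refine ge_of_tendsto' (by simpa using tendsto_const_nhds.add hE_lim) fun M =>
    lintegral_le_add_measure_of_forall_notMem_exists_nat_mul_le_birkhoffSum hf hg hcm hc hc1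
      (hEm M) (M := M) fun x hx => ?_
  simpa only [E, mem_ofPred_eq, not_forall, not_lt, exists_prop] using hx

theorem lintegral_upperBirkhoffAverage_le [IsFiniteMeasure μ] (hf : MeasurePreserving f μ μ)
    (hgm : Measurable g) (hg : g ≤ 1) :
    ∫⁻ x, upperBirkhoffAverage f g x ∂μ ≤ ∫⁻ x, g x ∂μ := by
  have hφm := measurable_upperBirkhoffAverage hf.measurable hgm
  refine ENNReal.le_of_forall_lt_one_mul_le fun a ha => ?_
  rw [← lintegral_const_mul _ hφm]
  refine lintegral_le_of_forall_exists_nat_mul_le_birkhoffSum hf hgm (hφm.const_mul a)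
    (funext fun x => congrArg (a * ·) (congrFun (upperBirkhoffAverage_comp_self hg) x))
    (fun x => mul_le_one' ha.le (upperBirkhoffAverage_le_one hg x)) fun x => ?_
  set φ := upperBirkhoffAverage f g
  rcases eq_or_ne (φ x) 0 with h0 | h0
  · exact ⟨1, le_rfl, by simp [h0]⟩
  have hlt : a * φ x < φ x := by
    simpa [mul_comm] using ENNReal.mul_lt_mul_right h0
      ((upperBirkhoffAverage_le_one hg x).trans_lt ENNReal.one_lt_top).ne ha
  obtain ⟨n, hn1, hn⟩ :=
    (frequently_lt_of_lt_limsup (by isBoundedDefault) hlt).forall_exists_of_atTop 1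
  refine ⟨n, hn1, ?_⟩
  rw [mul_comm]
  exact (ENNReal.le_div_iff_mul_le (Or.inl (Nat.cast_ne_zero.2 (by omega)))
    (Or.inl (ENNReal.natCast_ne_top n))).1 hn.le

end UpperBirkhoffAverage

section TauOrbit

variable {X : Type*} {f : X → X}

theorem measurable_tauOrbit [MeasurableSpace X] (hf : Measurable f) {A : Set X}
    (hA : MeasurableSet A) : Measurable fun x => tauOrbit f x A := by
  simpa only [tauOrbit_eq_upperBirkhoffAverage] using
    measurable_upperBirkhoffAverage hf (measurable_one.indicator hA)

theorem lintegral_tauOrbit_le [MeasurableSpace X] {μ : Measure X} [IsFiniteMeasure μ]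
    (hf : MeasurePreserving f μ μ) {A : Set X} (hA : MeasurableSet A) :
    ∫⁻ x, tauOrbit f x A ∂μ ≤ μ A := by
  simp_rw [tauOrbit_eq_upperBirkhoffAverage]
  exact (lintegral_upperBirkhoffAverage_le hf (measurable_one.indicator hA)
    (indicator_le_self' fun _ _ => zero_le_one)).trans_eq (lintegral_indicator_one hA)

theorem one_le_tsum_tauOrbit [TopologicalSpace X] [CompactSpace X] (f : X → X) (x : X)
    {I : ℕ → Set X} (hI : ∀ n, IsOpen (I n)) (hcov : univ ⊆ ⋃ n, I n) :
    1 ≤ ∑' n, tauOrbit f x (I n) := by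
  obtain ⟨s, hs⟩ := isCompact_univ.elim_finite_subcover I hI hcov
  have hone : (1 : X → ℝ≥0∞) ≤ ∑ n ∈ s, (I n).indicator 1 := fun y => by
    obtain ⟨n, hn, hy⟩ := mem_iUnion₂.1 (hs (mem_univ y))
    calc (1 : ℝ≥0∞) = (I n).indicator 1 y := (indicator_of_mem hy (1 : X → ℝ≥0∞)).symm
      _ ≤ ∑ n ∈ s, (I n).indicator 1 y :=
          Finset.single_le_sum (f := fun n => (I n).indicator 1 y) (fun _ _ => zero_le) hn
      _ = (∑ n ∈ s, (I n).indicator 1) y := (Finset.sum_apply _ _ _).symm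
  calc 1 = upperBirkhoffAverage f 1 x := (upperBirkhoffAverage_one f x).symm
    _ ≤ upperBirkhoffAverage f (∑ n ∈ s, (I n).indicator 1) x := upperBirkhoffAverage_mono hone x
    _ ≤ ∑ n ∈ s, tauOrbit f x (I n) :=
        Finset.le_sum_of_subadditive (fun g => upperBirkhoffAverage f g x)
          (upperBirkhoffAverage_zero f x).le (fun _ _ => upperBirkhoffAverage_add_le x) s _
    _ ≤ ∑' n, tauOrbit f x (I n) := ENNReal.sum_le_tsum s

end TauOrbit

theorem exists_open_cover_ediam_le_tsum_measure_le {X : Type*} [PseudoMetricSpace X]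
    [TopologicalSpace.SeparableSpace X] [MeasurableSpace X] [BorelSpace X]
    (μ : Measure X) [IsFiniteMeasure μ] {r : ℝ} (hr : 0 < r) {ε : ℝ≥0∞} (hε : ε ≠ 0) :
    ∃ I : ℕ → Set X, univ ⊆ ⋃ n, I n ∧ (∀ n, IsOpen (I n)) ∧
      (∀ n, Metric.ediam (I n) ≤ ENNReal.ofReal r) ∧ ∑' n, μ (I n) ≤ μ univ + ε := by
  rcases isEmpty_or_nonempty X with hX | hX
  · exact ⟨fun _ => ∅, by simp [univ_eq_empty_iff.2 hX], fun _ => isOpen_empty, by simp, by simp⟩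
  obtain ⟨y, hy⟩ := TopologicalSpace.exists_dense_seq X
  set B : ℕ → Set X := fun n => Metric.ball (y n) (r / 2)
  have hB : ⋃ n, B n = univ :=
    eq_univ_of_forall fun z =>
      let ⟨n, hn⟩ := hy.exists_dist_lt z (half_pos hr)
      mem_iUnion.2 ⟨n, Metric.mem_ball.2 hn⟩
  have hsum : ∑' n, μ (disjointed B n) ≤ μ univ :=
    (tsum_meas_le_meas_iUnion_of_disjoint μ (.disjointed fun _ => Metric.isOpen_ball.measurableSet)
      (disjoint_disjointed B)).trans (measure_mono (subset_univ _))
  -- Outer regularity thickens the pieces of the disjointed ball cover to open sets.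
  obtain ⟨δ, hδ0, hδ⟩ := ENNReal.exists_pos_sum_of_countable hε ℕ
  have hV (n : ℕ) : ∃ V ⊇ disjointed B n, IsOpen V ∧ μ V < μ (disjointed B n) + δ n :=
    (disjointed B n).exists_isOpen_lt_of_lt _
      (ENNReal.lt_add_right (measure_ne_top μ _) (by simpa using (hδ0 n).ne'))
  choose V hBV hVo hVμ using hV
  refine ⟨fun n => V n ∩ B n, ?_, fun n => (hVo n).inter Metric.isOpen_ball, fun n => ?_, ?_⟩
  · rw [← hB, ← iUnion_disjointed]
    exact iUnion_mono fun n => subset_inter (hBV n) (disjointed_subset B n)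
  · calc Metric.ediam (V n ∩ B n) ≤ Metric.ediam (B n) := Metric.ediam_mono inter_subset_right
      _ ≤ 2 * ENNReal.ofReal (r / 2) := by
          simp only [B, ← Metric.eball_ofReal]; exact Metric.ediam_eball_le
      _ = ENNReal.ofReal r := by
          rw [← ENNReal.ofReal_ofNat 2, ← ENNReal.ofReal_mul zero_le_two]; ring_nf
  · calc ∑' n, μ (V n ∩ B n) ≤ ∑' n, (μ (disjointed B n) + δ n) :=
          ENNReal.tsum_le_tsum fun n => (measure_mono inter_subset_left).trans (hVμ n).le
      _ = ∑' n, μ (disjointed B n) + ∑' n, (δ n : ℝ≥0∞) := ENNReal.tsum_add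
      _ ≤ μ univ + ε := add_le_add hsum hδ.le

section Caratheodory

variable {X : Type*} [MetricSpace X] {f : X → X}

theorem nuAux_le_nuAux_of_le {r r' : ℝ} (hrr' : r ≤ r') (x : X) (Y : Set X) :
    nuAux f x r' Y ≤ nuAux f x r Y :=
  iInf_mono fun _ => iInf_mono fun _ => iInf_mono fun _ => iInf_mono' fun hdiam =>
    ⟨fun n => (hdiam n).trans (ENNReal.ofReal_le_ofReal hrr'), le_rfl⟩

theorem nuFun_le_of_forall_nat {x : X} {Y : Set X} {a : ℝ≥0∞}
    (h : ∀ k : ℕ, nuAux f x (1 / (k + 1)) Y ≤ a) : nuFun f x Y ≤ a :=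
  iSup₂_le fun _ hr =>
    let ⟨k, hk⟩ := exists_nat_one_div_lt hr
    (nuAux_le_nuAux_of_le hk.le x Y).trans (h k)

variable [CompactSpace X]

theorem one_le_nuAux_univ (f : X → X) (x : X) (r : ℝ) : 1 ≤ nuAux f x r univ :=
  le_iInf fun _ => le_iInf fun hcov => le_iInf fun hI => le_iInf fun _ =>
    one_le_tsum_tauOrbit f x hI hcov

theorem one_le_nuFun_univ (f : X → X) (x : X) : 1 ≤ nuFun f x univ :=
  (one_le_nuAux_univ f x 1).trans (le_iSup₂ (f := fun r (_ : 0 < r) => nuAux f x r univ) 1 one_pos)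

theorem ae_nuAux_univ_le_one [MeasurableSpace X] [BorelSpace X] {μ : Measure X}
    [IsFiniteMeasure μ] (hf : MeasurePreserving f μ μ) {r : ℝ} (hr : 0 < r) :
    ∀ᵐ x ∂μ, nuAux f x r univ ≤ 1 := by
  choose I hIcov hIo hIdiam hIμ using fun m : ℕ =>
    exists_open_cover_ediam_le_tsum_measure_le μ hr
      (ENNReal.inv_ne_zero.2 (ENNReal.natCast_ne_top m))
  set H : X → ℝ≥0∞ := fun x => ⨅ m, ∑' n, tauOrbit f x (I m n)
  have hHm : Measurable H :=
    .iInf fun m => .tsum fun n => measurable_tauOrbit hf.measurable (hIo m n).measurableSet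
  have hH_int : ∫⁻ x, H x ∂μ ≤ μ univ := by
    refine ge_of_tendsto' (by simpa using tendsto_const_nhds.add ENNReal.tendsto_inv_nat_nhds_zero)
      fun m => ?_
    calc ∫⁻ x, H x ∂μ ≤ ∫⁻ x, ∑' n, tauOrbit f x (I m n) ∂μ := lintegral_mono fun x => iInf_le _ m
      _ = ∑' n, ∫⁻ x, tauOrbit f x (I m n) ∂μ := lintegral_tsum fun n =>
          (measurable_tauOrbit hf.measurable (hIo m n).measurableSet).aemeasurable
      _ ≤ ∑' n, μ (I m n) := ENNReal.tsum_le_tsum fun n =>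
          lintegral_tauOrbit_le hf (hIo m n).measurableSet
      _ ≤ μ univ + (m : ℝ≥0∞)⁻¹ := hIμ m
  have hH : (fun _ => 1) =ᵐ[μ] H := ae_eq_of_ae_le_of_lintegral_le
    (ae_of_all _ fun x => le_iInf fun m => one_le_tsum_tauOrbit f x (hIo m) (hIcov m))
    (by simp) hHm.aemeasurable (hH_int.trans_eq lintegral_one.symm)
  filter_upwards [hH] with x hx
  refine (le_iInf fun m => ?_).trans hx.ge
  exact iInf₂_le_of_le (I m) (hIcov m) <| iInf₂_le_of_le (hIo m) (hIdiam m) le_rfl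

end Caratheodory

theorem eta_probability_ae_general
    {X : Type*} [MetricSpace X] [CompactSpace X] [MeasurableSpace X] [BorelSpace X]
    (f : X → X) (hf : Measurable f)
    (η : X → Measure X) (hη : ∀ x : X, ∀ E : Set X, MeasurableSet E → η x E = nuFun f x E)
    (μ : Measure X) [IsFiniteMeasure μ]
    (hinv : ∀ E : Set X, MeasurableSet E → μ (f ⁻¹' E) = μ E) :
    ∀ᵐ x ∂μ, η x Set.univ = 1 := by
  have hpres : MeasurePreserving f μ μ :=
    ⟨hf, Measure.ext fun E hE => by rw [Measure.map_apply hf hE, hinv E hE]⟩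
  have hnu : ∀ᵐ x ∂μ, ∀ k : ℕ, nuAux f x (1 / (k + 1)) univ ≤ 1 :=
    ae_all_iff.2 fun k => ae_nuAux_univ_le_one hpres (by positivity)
  filter_upwards [hnu] with x hx
  rw [hη x univ MeasurableSet.univ]
  exact le_antisymm (nuFun_le_of_forall_nat hx) (one_le_nuFun_univ f x)

/-- If `𝕏` is a perfect compact metric space, `f : 𝕏 → 𝕏` is Borel measurable and `μ` is an
`f`-invariant finite Borel measure, then `η_x` is a probability measure (`η_x(𝕏) = 1`) for
`μ`-almost every `x ∈ 𝕏`. -/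
theorem eta_probability_ae
    {X : Type*} [MetricSpace X] [CompactSpace X] [MeasurableSpace X] [BorelSpace X]
    (hperf : Perfect (Set.univ : Set X))
    (f : X → X) (hf : Measurable f)
    (η : X → Measure X) (hη : ∀ x : X, ∀ E : Set X, MeasurableSet E → η x E = nuFun f x E)
    (μ : Measure X) [IsFiniteMeasure μ]
    (hinv : ∀ E : Set X, MeasurableSet E → μ (f ⁻¹' E) = μ E) :
    ∀ᵐ x ∂μ, η x Set.univ = 1 :=
  eta_probability_ae_general f hf η hη μ hinv
end

section
/- In every mixing topological Markov chain (𝕏,σ) over a countable alphabet with at least two symbols and aperiodic incidence matrix, the set of wild historic points of σ is residual in 𝕏, i.e. it contains a countable intersection of open dense subsets of 𝕏. -/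
open MeasureTheory Filter Set Topology
open scoped ENNReal

/-- The space of admissible sequences of a topological Markov chain with alphabet `S` and
incidence relation `a` (`a b c` means the transition `b → c` is allowed). -/
def MarkovShift {S : Type*} (a : S → S → Prop) : Type _ :=
  {x : ℕ → S // ∀ i : ℕ, a (x i) (x (i + 1))}

/-- The metric `d(x,y) = (1/2)^(min{i : x_i ≠ y_i})` on sequence space. -/
noncomputable instance {S : Type*} [TopologicalSpace S] [DiscreteTopology S] :
    MetricSpace (ℕ → S) :=
  PiNat.metricSpace

noncomputable instance {S : Type*} [TopologicalSpace S] [DiscreteTopology S]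
    (a : S → S → Prop) : MetricSpace (MarkovShift a) :=
  inferInstanceAs (MetricSpace {x : ℕ → S // ∀ i : ℕ, a (x i) (x (i + 1))})

noncomputable instance {S : Type*} [TopologicalSpace S] [DiscreteTopology S] (a : S → S → Prop) :
    MeasurableSpace (MarkovShift a) := borel _

instance {S : Type*} [TopologicalSpace S] [DiscreteTopology S] (a : S → S → Prop) :
    BorelSpace (MarkovShift a) := ⟨rfl⟩

/-- The left shift map on the topological Markov chain. -/
def markovLeftShift {S : Type*} (a : S → S → Prop) : MarkovShift a → MarkovShift a :=
  fun x => ⟨fun i => x.1 (i + 1), fun i => x.2 (i + 1)⟩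

/-- Aperiodicity of the incidence matrix: there is `N ≥ 1` such that any two symbols are
joined by an admissible word of length `N`. -/
def MarkovAperiodic {S : Type*} (a : S → S → Prop) : Prop :=
  ∃ N : ℕ, 1 ≤ N ∧ ∀ b c : S, ∃ u : ℕ → S, u 0 = b ∧ u N = c ∧ ∀ i < N, a (u i) (u (i + 1))

/-!
Aperiodicity provides admissible bridges of one fixed length `N` between any two symbols, so
admissible words can be concatenated at will. Fix a cylinder of length `n` and a bound `m`.
Bridging through `j` binary choices of symbols produces `2 ^ j` periodic points in the cylinder,
of common period `q = n + (j + 1) N`, which are pairwise `2 ^ -(n + j N + 1)`-separated. The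
points whose orbit shadows each of these periodic orbits for `L + 1` periods, starting before
time `L q`, for arbitrarily large `L`, form a dense `G_δ`. Along such an orbit every
neighbourhood of each periodic point is visited with upper frequency at least `1 / (2 q)`, so
every cover by sets of small diameter costs at least `2 ^ j / (2 q) ≥ m`. Intersecting over `m`
and over a countable basis of the topology gives a residual set of wild historic points.
-/

section OrbitFrequency

variable {X : Type*} (f : X → X)

/-- The condition `s < L * q` makes these `L + 1` visits a fraction at least `1 / (2 q)` of the
times up to `s + L q`; `T ≤ L * q` pushes that time past `T`. -/
def regularVisits (U : Set X) (q T : ℕ) : Set X :=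
  ⋃ (s : ℕ) (L : ℕ) (_ : s < L * q ∧ T ≤ L * q), ⋂ l ∈ Iic L, f^[s + l * q] ⁻¹' U

variable {f}

theorem mem_regularVisits {U : Set X} {q T : ℕ} {z : X} :
    z ∈ regularVisits f U q T ↔
      ∃ s L, (s < L * q ∧ T ≤ L * q) ∧ ∀ l ≤ L, f^[s + l * q] z ∈ U := by
  simp [regularVisits]

theorem isOpen_regularVisits [TopologicalSpace X] (hf : Continuous f) {U : Set X} (hU : IsOpen U)
    (q T : ℕ) : IsOpen (regularVisits f U q T) :=
  isOpen_iUnion fun _ => isOpen_iUnion fun _ => isOpen_iUnion fun _ =>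
    (finite_Iic _).isOpen_biInter fun _ _ => hU.preimage (hf.iterate _)

theorem regularVisits_mono {U V : Set X} (hUV : U ⊆ V) {q T T' : ℕ} (hT : T' ≤ T) :
    regularVisits f U q T ⊆ regularVisits f V q T' := by
  simp only [subset_def, mem_regularVisits]
  rintro z ⟨s, L, ⟨hs, hL⟩, hvis⟩
  exact ⟨s, L, ⟨hs, hT.trans hL⟩, fun l hl => hUV (hvis l hl)⟩

theorem card_le_sum_indicator_of_visits {U : Set X} {z : X} {s L q : ℕ} (hq : 0 < q)
    (hvis : ∀ l ≤ L, f^[s + l * q] z ∈ U) :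
    ((L + 1 : ℕ) : ℝ≥0∞) ≤
      ∑ j ∈ Finset.range (s + L * q + 1), U.indicator (fun _ => (1 : ℝ≥0∞)) (f^[j] z) := by
  have hinj : InjOn (fun l => s + l * q) (Finset.range (L + 1) : Set ℕ) := fun l _ l' _ h =>
    Nat.eq_of_mul_eq_mul_right hq (Nat.add_left_cancel h)
  set g : ℕ → ℝ≥0∞ := fun j => U.indicator (fun _ => 1) (f^[j] z)
  calc ((L + 1 : ℕ) : ℝ≥0∞) = ∑ l ∈ Finset.range (L + 1), g (s + l * q) := by
        rw [Finset.sum_congr rfl fun l hl => indicator_of_mem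
          (hvis l (Nat.lt_succ_iff.1 (Finset.mem_range.1 hl))) _]
        simp
    _ = ∑ j ∈ (Finset.range (L + 1)).image (fun l => s + l * q), g j :=
        (Finset.sum_image hinj).symm
    _ ≤ ∑ j ∈ Finset.range (s + L * q + 1), g j := by
        refine Finset.sum_le_sum_of_subset fun j hj => ?_
        obtain ⟨l, hl, rfl⟩ := Finset.mem_image.1 hj
        have := Nat.mul_le_mul_right q (Nat.lt_succ_iff.1 (Finset.mem_range.1 hl))
        exact Finset.mem_range.2 (by omega)

theorem inv_two_mul_le_tauOrbit {U : Set X} {z : X} {q : ℕ}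
    (h : ∀ T, z ∈ regularVisits f U q T) : ((2 * q : ℕ) : ℝ≥0∞)⁻¹ ≤ tauOrbit f z U := by
  refine le_limsup_of_frequently_le' (frequently_atTop.2 fun T => ?_)
  obtain ⟨s, L, ⟨hs, hT⟩, hvis⟩ := mem_regularVisits.1 (h T)
  have hq : 0 < q := Nat.pos_of_ne_zero (by rintro rfl; simp at hs)
  refine ⟨s + L * q + 1, by omega, ?_⟩
  have hlen : s + L * q + 1 ≤ (L + 1) * (2 * q) := by nlinarith
  calc ((2 * q : ℕ) : ℝ≥0∞)⁻¹ = ((L + 1 : ℕ) : ℝ≥0∞) / ((L + 1 : ℕ) * (2 * q : ℕ)) := by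
        rw [← mul_one ((L + 1 : ℕ) : ℝ≥0∞), mul_assoc,
          ENNReal.mul_div_mul_left _ _ (by simp) (by simp), one_mul, one_div]
    _ ≤ ((L + 1 : ℕ) : ℝ≥0∞) / ((s + L * q + 1 : ℕ) : ℝ≥0∞) :=
        ENNReal.div_le_div_left (by exact_mod_cast hlen) _
    _ ≤ _ := ENNReal.div_le_div_right (card_le_sum_indicator_of_visits hq hvis) _

end OrbitFrequency

section Caratheodory

variable {X : Type*} [MetricSpace X] (f : X → X) (z : X)

theorem nuAux_le_nuFun {r : ℝ} (hr : 0 < r) (Y : Set X) : nuAux f z r Y ≤ nuFun f z Y :=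
  le_iSup₂ (f := fun r (_ : 0 < r) => nuAux f z r Y) r hr

theorem nuFun_mono : Monotone (nuFun f z) := fun _ _ hYY' =>
  iSup₂_mono fun _ _ => iInf_mono fun _ =>
    iInf₂_mono' fun hcov hopen => ⟨hYY'.trans hcov, hopen, le_rfl⟩

variable {f z}

/-- Sets of diameter at most `r` contain at most one point of an `r`-separated family. -/
theorem card_mul_le_nuAux {ι : Type*} [Fintype ι] {P : ι → X} {Y : Set X} {r : ℝ} {c : ℝ≥0∞}
    (hY : ∀ i, P i ∈ Y) (hsep : Pairwise fun i i' => ENNReal.ofReal r < edist (P i) (P i'))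
    (hc : ∀ i U, IsOpen U → P i ∈ U → c ≤ tauOrbit f z U) :
    Fintype.card ι * c ≤ nuAux f z r Y := by
  refine le_iInf fun I => le_iInf fun hcov => le_iInf fun hopen => le_iInf fun hdiam => ?_
  choose ℓ hℓ using fun i => mem_iUnion.1 (hcov (hY i))
  have hinj : Function.Injective ℓ := fun i i' h => by
    by_contra hne
    exact (hsep hne).not_ge ((Metric.edist_le_ediam_of_mem (hℓ i) (h ▸ hℓ i')).trans (hdiam _))
  calc Fintype.card ι * c = ∑ i, c := by simp
    _ ≤ ∑ i, tauOrbit f z (I (ℓ i)) := Finset.sum_le_sum fun i _ => hc i _ (hopen _) (hℓ i)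
    _ = ∑' i, tauOrbit f z (I (ℓ i)) := (tsum_fintype _).symm
    _ ≤ ∑' n, tauOrbit f z (I n) := ENNReal.tsum_comp_le_tsum_of_injective hinj _

end Caratheodory

theorem exists_natCast_le_two_pow_mul_inv (m n : ℕ) {N : ℕ} (hN : 0 < N) :
    ∃ j, (m : ℝ≥0∞) ≤ 2 ^ j * ((2 * (n + j * N + N) : ℕ) : ℝ≥0∞)⁻¹ := by
  obtain ⟨k, hk⟩ : ∃ k, k = 2 * m * (n + N) + 4 * m * N + 1 := ⟨_, rfl⟩
  refine ⟨2 * k, ?_⟩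
  rw [← div_eq_mul_inv, ENNReal.le_div_iff_mul_le (Or.inl (by simp; omega))
    (Or.inl (ENNReal.natCast_ne_top _))]
  have hlin : m * (2 * (n + 2 * k * N + N)) ≤ k * k := by
    have hA : 2 * m * (n + N) ≤ k * (2 * m * (n + N)) := Nat.le_mul_of_pos_left _ (by omega)
    calc m * (2 * (n + 2 * k * N + N)) = 2 * m * (n + N) + 4 * m * N * k := by ring
      _ ≤ k * (2 * m * (n + N) + 4 * m * N + 1) := by nlinarith
      _ = k * k := by rw [← hk]
  have hpow : k * k ≤ 2 ^ (2 * k) := by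
    rw [two_mul, pow_add]
    exact Nat.mul_le_mul Nat.lt_two_pow_self.le Nat.lt_two_pow_self.le
  exact_mod_cast hlin.trans hpow

theorem exists_seq_isOpen_dense_iInter_subset {X : Type*} [TopologicalSpace X] {s : Set X}
    (hs : s ∈ residual X) : ∃ G : ℕ → Set X, (∀ n, IsOpen (G n) ∧ Dense (G n)) ∧ ⋂ n, G n ⊆ s := by
  obtain ⟨T, hTo, hTd, hTc, hTs⟩ := mem_residual_iff.1 hs
  obtain ⟨G, hG⟩ := (hTc.insert univ).exists_eq_range (insert_nonempty _ _)
  refine ⟨G, fun n => ?_, ?_⟩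
  · rcases (hG ▸ mem_range_self n : G n ∈ insert univ T) with h | h
    · exact h ▸ ⟨isOpen_univ, dense_univ⟩
    · exact ⟨hTo _ h, hTd _ h⟩
  · rwa [← sInter_range, ← hG, sInter_insert, univ_inter]

theorem rel_mod_of_rel {S : Type*} {a : S → S → Prop} {u : ℕ → S} {q : ℕ} (hq : 0 < q)
    (hu : ∀ i < q, a (u i) (u (i + 1))) (hper : u q = u 0) (i : ℕ) :
    a (u (i % q)) (u ((i + 1) % q)) := by
  have hlt : i % q < q := Nat.mod_lt i hq
  rw [← Nat.mod_add_mod]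
  rcases (show i % q + 1 ≤ q from hlt).lt_or_eq with hnext | hnext
  · rw [Nat.mod_eq_of_lt hnext]
    exact hu _ hlt
  · have h := hu _ hlt
    rw [hnext, hper] at h
    rwa [hnext, Nat.mod_self]

structure UniformBridge {S : Type*} (a : S → S → Prop) (N : ℕ) where
  path : S → S → ℕ → S
  path_zero : ∀ b c, path b c 0 = b
  path_length : ∀ b c, path b c N = c
  rel_path : ∀ b c, ∀ i < N, a (path b c i) (path b c (i + 1))

theorem MarkovAperiodic.exists_uniformBridge {S : Type*} {a : S → S → Prop}
    (h : MarkovAperiodic a) : ∃ N, 0 < N ∧ Nonempty (UniformBridge a N) := by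
  obtain ⟨N, hN, hpath⟩ := h
  choose path path_zero path_length rel_path using hpath
  exact ⟨N, hN, ⟨⟨path, path_zero, path_length, rel_path⟩⟩⟩

namespace UniformBridge

variable {S : Type*} {a : S → S → Prop} {N : ℕ} (B : UniformBridge a N)

def splice (x : ℕ → S) (n : ℕ) (y : ℕ → S) : ℕ → S := fun i =>
  if i < n then x i else if i < n + N then B.path (x n) (y 0) (i - n) else y (i - (n + N))

variable {B} {x y : ℕ → S} {n : ℕ}

theorem splice_of_lt {i : ℕ} (hi : i < n) : B.splice x n y i = x i :=
  if_pos hi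

theorem splice_add_of_le {r : ℕ} (hr : r ≤ N) :
    B.splice x n y (n + r) = B.path (x n) (y 0) r := by
  rcases hr.lt_or_eq with hr | rfl
  · simp [splice, hr]
  · simp [splice, B.path_length]

theorem splice_of_le {i : ℕ} (hi : i ≤ n) : B.splice x n y i = x i := by
  rcases hi.lt_or_eq with hi | rfl
  · exact splice_of_lt hi
  · simpa [B.path_zero] using splice_add_of_le (B := B) (x := x) (y := y) (n := i) N.zero_le

theorem splice_add_add (i : ℕ) : B.splice x n y (n + N + i) = y i := by
  simp [splice, show ¬ n + N + i < n by omega]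

theorem splice_rel (hx : ∀ i < n, a (x i) (x (i + 1))) {k : ℕ}
    (hy : ∀ i < k, a (y i) (y (i + 1))) :
    ∀ i < n + N + k, a (B.splice x n y i) (B.splice x n y (i + 1)) := by
  intro i hi
  rcases lt_or_ge i n with hin | hin
  · rw [splice_of_le hin.le, splice_of_le hin]
    exact hx i hin
  rcases lt_or_ge i (n + N) with hiN | hiN
  · obtain ⟨r, rfl⟩ := Nat.exists_eq_add_of_le hin
    rw [add_assoc, splice_add_of_le (by omega), splice_add_of_le (by omega)]
    exact B.rel_path _ _ r (by omega)
  · obtain ⟨r, rfl⟩ := Nat.exists_eq_add_of_le hiN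
    rw [add_assoc (n + N), splice_add_add, splice_add_add]
    exact hy r (by omega)

variable (B)

/-- `x` up to time `n`, then bridges through the symbols `ε 0, …, ε (k - 1)`, which sit at the
times `n + N, n + 2 N, …, n + k N`. -/
def plantWord (x : ℕ → S) (n : ℕ) (ε : ℕ → S) : ℕ → ℕ → S
  | 0 => x
  | k + 1 => B.splice (plantWord x n ε k) (n + k * N) fun _ => ε k

variable {B} {ε : ℕ → S}

theorem plantWord_eq_of_le {k k' i : ℕ} (hk : k ≤ k') (hi : i ≤ n + k * N) :
    B.plantWord x n ε k' i = B.plantWord x n ε k i := by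
  induction k', hk using Nat.le_induction with
  | base => rfl
  | succ k' hk ih =>
    rw [plantWord, splice_of_le (hi.trans (by gcongr)), ih]

theorem plantWord_of_le {k i : ℕ} (hi : i ≤ n) : B.plantWord x n ε k i = x i :=
  plantWord_eq_of_le k.zero_le (by simpa using hi)

theorem plantWord_letter {k i : ℕ} (hi : i < k) : B.plantWord x n ε k (n + (i + 1) * N) = ε i := by
  rw [plantWord_eq_of_le hi le_rfl, plantWord, ← add_zero (n + (i + 1) * N),
    show n + (i + 1) * N = n + i * N + N by ring, splice_add_add]

theorem plantWord_rel (hx : ∀ i < n, a (x i) (x (i + 1))) (k : ℕ) :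
    ∀ i < n + k * N, a (B.plantWord x n ε k i) (B.plantWord x n ε k (i + 1)) := by
  induction k with
  | zero => simpa [plantWord] using hx
  | succ k ih =>
    rw [show n + (k + 1) * N = n + k * N + N + 0 by ring]
    exact splice_rel ih fun _ h => absurd h (Nat.not_lt_zero _)

variable (B)

def periodicPoint (x : ℕ → S) (n j : ℕ) (ε : ℕ → S) (i : ℕ) : S :=
  B.splice (B.plantWord x n ε j) (n + j * N) (fun _ => x 0) (i % (n + j * N + N))

variable {B} {j : ℕ}

theorem periodicPoint_rel (hN : 0 < N) (hx : ∀ i < n, a (x i) (x (i + 1))) (i : ℕ) :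
    a (B.periodicPoint x n j ε i) (B.periodicPoint x n j ε (i + 1)) := by
  refine rel_mod_of_rel (by omega) (splice_rel (k := 0) (plantWord_rel hx j) ?_) ?_ i
  · exact fun _ h => absurd h (Nat.not_lt_zero _)
  · exact (splice_add_add 0).trans
      ((splice_of_le (Nat.zero_le _)).trans (plantWord_of_le n.zero_le)).symm

theorem periodicPoint_mul_add (l i : ℕ) :
    B.periodicPoint x n j ε (l * (n + j * N + N) + i) = B.periodicPoint x n j ε i := by
  rw [periodicPoint, periodicPoint, Nat.mul_add_mod']

theorem periodicPoint_of_lt {i : ℕ} (hi : i < n) : B.periodicPoint x n j ε i = x i := by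
  rw [periodicPoint, Nat.mod_eq_of_lt (by omega), splice_of_le (by omega), plantWord_of_le hi.le]

theorem periodicPoint_letter (hN : 0 < N) {i : ℕ} (hi : i < j) :
    B.periodicPoint x n j ε (n + (i + 1) * N) = ε i := by
  have hle : n + (i + 1) * N ≤ n + j * N := by gcongr; omega
  rw [periodicPoint, Nat.mod_eq_of_lt (by omega), splice_of_le hle, plantWord_letter hi]

end UniformBridge

theorem UniformBridge.exists_shadowing {S : Type*} {a : S → S → Prop} {N : ℕ}
    (B : UniformBridge a N) {ι : Type*} (P : ι → ℕ → S) (hP : ∀ γ i, a (P γ i) (P γ (i + 1)))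
    (len : ℕ → ℕ) (F : Finset ι) (y : ℕ → S) (hy : ∀ i, a (y i) (y (i + 1))) (n : ℕ) :
    ∃ z : ℕ → S, (∀ i, a (z i) (z (i + 1))) ∧ (∀ i < n, z i = y i) ∧
      ∀ γ ∈ F, ∃ s, ∀ i ≤ len s, z (s + i) = P γ i := by
  classical
  induction F using Finset.induction_on generalizing y n with
  | empty => exact ⟨y, hy, fun _ _ => rfl, by simp⟩
  | insert γ F _ ih =>
    obtain ⟨z, hz, hzpre, hzF⟩ := ih (B.splice y n (P γ))
      (fun i => splice_rel (k := i + 1) (fun i _ => hy i) (fun i _ => hP γ i) i (by omega))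
      (n + N + len (n + N) + 1)
    refine ⟨z, hz, fun i hi => (hzpre i (by omega)).trans (splice_of_lt hi), ?_⟩
    rintro γ' hγ'
    rcases Finset.mem_insert.1 hγ' with rfl | hγ'
    · exact ⟨n + N, fun i hi => (hzpre _ (by omega)).trans (splice_add_add i)⟩
    · exact hzF γ' hγ'

namespace MarkovShift

variable {S : Type*} {a : S → S → Prop}

def cylinder (x : ℕ → S) (n : ℕ) : Set (MarkovShift a) := Subtype.val ⁻¹' PiNat.cylinder x n

theorem mem_cylinder_iff {x : ℕ → S} {n : ℕ} {y : MarkovShift a} :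
    y ∈ cylinder x n ↔ ∀ i < n, y.1 i = x i :=
  PiNat.mem_cylinder_iff

theorem iterate_markovLeftShift_apply (z : MarkovShift a) (j i : ℕ) :
    ((markovLeftShift a)^[j] z).1 i = z.1 (i + j) := by
  induction j generalizing z with
  | zero => rfl
  | succ j ih => rw [Function.iterate_succ_apply, ih]; rfl

variable [TopologicalSpace S] [DiscreteTopology S]

instance [Countable S] : SecondCountableTopology (MarkovShift a) :=
  inferInstanceAs (SecondCountableTopology {x : ℕ → S // ∀ i : ℕ, a (x i) (x (i + 1))})

theorem isOpen_cylinder (x : ℕ → S) (n : ℕ) : IsOpen (cylinder (a := a) x n) :=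
  (PiNat.isOpen_cylinder _ x n).preimage continuous_subtype_val

theorem cylinder_subset_ball (y : MarkovShift a) {n : ℕ} {r : ℝ} (hn : (1 / 2 : ℝ) ^ n < r) :
    cylinder y.1 n ⊆ Metric.ball y r := fun _ hy' =>
  (PiNat.mem_cylinder_iff_dist_le.1 hy').trans_lt hn

theorem exists_cylinder_subset {U : Set (MarkovShift a)} (hU : IsOpen U) {y : MarkovShift a}
    (hy : y ∈ U) : ∃ n, cylinder y.1 n ⊆ U := by
  obtain ⟨r, hr, hball⟩ := Metric.isOpen_iff.1 hU y hy
  obtain ⟨n, hn⟩ := exists_pow_lt_of_lt_one hr (by norm_num : (1 / 2 : ℝ) < 1)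
  exact ⟨n, (cylinder_subset_ball y hn).trans hball⟩

theorem dense_of_forall_cylinder_inter_nonempty {D : Set (MarkovShift a)}
    (h : ∀ (y : MarkovShift a) n, (cylinder y.1 n ∩ D).Nonempty) : Dense D := by
  refine Metric.dense_iff.2 fun y r hr => ?_
  obtain ⟨n, hn⟩ := exists_pow_lt_of_lt_one hr (by norm_num : (1 / 2 : ℝ) < 1)
  exact (h y n).mono (inter_subset_inter_left _ (cylinder_subset_ball y hn))

theorem ofReal_lt_edist_of_apply_ne {y y' : MarkovShift a} {i n : ℕ} (hi : i ≤ n)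
    (hne : y.1 i ≠ y'.1 i) : ENNReal.ofReal ((1 / 2) ^ (n + 1)) < edist y y' := by
  rw [edist_dist, ENNReal.ofReal_lt_ofReal_iff_of_nonneg (by positivity)]
  by_contra! hle
  refine hne (PiNat.apply_eq_of_dist_lt (hle.trans_lt ?_) hi)
  exact pow_lt_pow_right_of_lt_one₀ (by norm_num) (by norm_num) n.lt_succ_self

theorem continuous_markovLeftShift : Continuous (markovLeftShift a) := by
  refine Continuous.subtype_mk ?_ _
  exact continuous_pi fun i => (continuous_apply (i + 1)).comp continuous_subtype_val

theorem dense_iInter_regularVisits {N : ℕ} (B : UniformBridge a N) {ι : Type*} [Fintype ι]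
    (P : ι → MarkovShift a) {q : ℕ} (hq : 0 < q)
    (hper : ∀ γ l i, (P γ).1 (l * q + i) = (P γ).1 i) (t : ℕ) :
    Dense (⋂ γ, regularVisits (markovLeftShift a) (cylinder (P γ).1 t) q t) := by
  refine dense_of_forall_cylinder_inter_nonempty fun y n => ?_
  obtain ⟨z, hz, hzy, hzP⟩ := B.exists_shadowing (fun γ => (P γ).1) (fun γ => (P γ).2)
    (fun s => (s + t + 1) * q + t) Finset.univ y.1 y.2 n
  refine ⟨(⟨z, hz⟩ : MarkovShift a), mem_cylinder_iff.2 hzy,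
    mem_iInter.2 fun γ => mem_regularVisits.2 ?_⟩
  obtain ⟨s, hs⟩ := hzP γ (Finset.mem_univ γ)
  refine ⟨s, s + t + 1, ⟨by nlinarith, by nlinarith⟩, fun l hl => mem_cylinder_iff.2 fun i hi => ?_⟩
  have : l * q ≤ (s + t + 1) * q := Nat.mul_le_mul_right q hl
  refine (iterate_markovLeftShift_apply (a := a) ⟨z, hz⟩ _ i).trans ?_
  rw [← hper γ l i, show i + (s + l * q) = s + (l * q + i) by ring]
  exact hs _ (by omega)

theorem inv_two_mul_le_tauOrbit_of_forall_mem_regularVisits {z P : MarkovShift a} {q : ℕ}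
    (hz : ∀ t, z ∈ regularVisits (markovLeftShift a) (cylinder P.1 t) q t)
    {U : Set (MarkovShift a)} (hU : IsOpen U) (hP : P ∈ U) :
    ((2 * q : ℕ) : ℝ≥0∞)⁻¹ ≤ tauOrbit (markovLeftShift a) z U := by
  obtain ⟨t₀, ht₀⟩ := exists_cylinder_subset hU hP
  exact inv_two_mul_le_tauOrbit fun T => regularVisits_mono
    ((preimage_mono (PiNat.cylinder_anti _ (le_max_right T t₀))).trans ht₀) (le_max_left T t₀)
    (hz _)

theorem setOf_natCast_le_nuFun_cylinder_mem_residual {N : ℕ} (hN : 0 < N)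
    (B : UniformBridge a N) {b c : S} (hbc : b ≠ c) (x : MarkovShift a) (n m : ℕ) :
    {z | (m : ℝ≥0∞) ≤ nuFun (markovLeftShift a) z (cylinder x.1 n)} ∈ residual (MarkovShift a) := by
  obtain ⟨j, hj⟩ := exists_natCast_le_two_pow_mul_inv m n hN
  set q := n + j * N + N
  let ε : (Fin j → Bool) → ℕ → S := fun γ i => if h : i < j then (if γ ⟨i, h⟩ then b else c) else b
  let P : (Fin j → Bool) → MarkovShift a := fun γ =>
    ⟨B.periodicPoint x.1 n j (ε γ), B.periodicPoint_rel hN fun i _ => x.2 i⟩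
  have hsep : Pairwise fun γ γ' =>
      ENNReal.ofReal ((1 / 2) ^ (n + j * N + 1)) < edist (P γ) (P γ') := by
    intro γ γ' hne
    obtain ⟨k, hk⟩ := Function.ne_iff.1 hne
    refine ofReal_lt_edist_of_apply_ne (i := n + (k + 1) * N) (by gcongr; omega) ?_
    simp only [P, B.periodicPoint_letter hN k.2, ε, dif_pos k.2]
    revert hk
    cases γ k <;> cases γ' k <;> simp [hbc, hbc.symm]
  have hvisits : ∀ t, ⋂ γ, regularVisits (markovLeftShift a) (cylinder (P γ).1 t) q t ∈
      residual (MarkovShift a) := fun t =>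
    residual_of_dense_open (isOpen_iInter_of_finite fun _ =>
        isOpen_regularVisits continuous_markovLeftShift (isOpen_cylinder _ _) _ _)
      (dense_iInter_regularVisits B P (by omega) (fun _ => B.periodicPoint_mul_add) t)
  filter_upwards [countable_iInter_mem.2 hvisits] with z hz
  calc (m : ℝ≥0∞) ≤ Fintype.card (Fin j → Bool) * ((2 * q : ℕ) : ℝ≥0∞)⁻¹ := by simpa using hj
    _ ≤ nuAux (markovLeftShift a) z ((1 / 2) ^ (n + j * N + 1)) (cylinder x.1 n) :=
        card_mul_le_nuAux (fun γ => mem_cylinder_iff.2 fun i hi => B.periodicPoint_of_lt hi) hsep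
          fun γ U hU hP => inv_two_mul_le_tauOrbit_of_forall_mem_regularVisits
            (fun t => mem_iInter.1 (mem_iInter.1 hz t) γ) hU hP
    _ ≤ _ := nuAux_le_nuFun _ _ (by positivity) _

theorem setOf_forall_nuFun_eq_top_mem_residual [Countable S] {N : ℕ} (hN : 0 < N)
    (B : UniformBridge a N) {b c : S} (hbc : b ≠ c) :
    {z : MarkovShift a | ∀ A, IsOpen A → A.Nonempty → nuFun (markovLeftShift a) z A = ∞} ∈
      residual (MarkovShift a) := by
  obtain ⟨𝓑, h𝓑c, h𝓑e, h𝓑⟩ := TopologicalSpace.exists_countable_basis (MarkovShift a)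
  have hbasic : ∀ U ∈ 𝓑, ∀ m : ℕ,
      {z | (m : ℝ≥0∞) ≤ nuFun (markovLeftShift a) z U} ∈ residual (MarkovShift a) := by
    intro U hU m
    obtain ⟨y, hy⟩ := nonempty_iff_ne_empty.2 fun h => h𝓑e (h ▸ hU)
    obtain ⟨n, hn⟩ := exists_cylinder_subset (h𝓑.isOpen hU) hy
    filter_upwards [setOf_natCast_le_nuFun_cylinder_mem_residual hN B hbc y n m] with z hz
    exact hz.trans (nuFun_mono _ _ hn)
  filter_upwards [(countable_bInter_mem h𝓑c).2 fun U hU => countable_iInter_mem.2 (hbasic U hU)]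
    with z hz A hA ⟨y, hy⟩
  obtain ⟨U, hU𝓑, -, hUA⟩ := h𝓑.exists_subset_of_mem_open hy hA
  refine ENNReal.eq_top_of_forall_nnreal_le fun r => ?_
  obtain ⟨m, hm⟩ := exists_nat_ge r
  calc (r : ℝ≥0∞) ≤ m := by exact_mod_cast hm
    _ ≤ nuFun (markovLeftShift a) z U := mem_iInter.1 (mem_iInter₂.1 hz U hU𝓑) m
    _ ≤ nuFun (markovLeftShift a) z A := nuFun_mono _ _ hUA

end MarkovShift

/-- In every mixing topological Markov chain over a countable alphabet with at least two
symbols and aperiodic incidence matrix, the set of wild historic points of the shift is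
residual: it contains a countable intersection of open dense subsets. -/
theorem wild_historic_residual_markov
    {S : Type*} [TopologicalSpace S] [DiscreteTopology S] [Countable S] [Nontrivial S]
    (a : S → S → Prop) (haper : MarkovAperiodic a)
    (η : MarkovShift a → Measure (MarkovShift a))
    (hη : ∀ z : MarkovShift a, ∀ E : Set (MarkovShift a), MeasurableSet E →
      η z E = nuFun (markovLeftShift a) z E) :
    ∃ G : ℕ → Set (MarkovShift a),
      (∀ n, IsOpen (G n) ∧ Dense (G n)) ∧
      (⋂ n, G n) ⊆
        {z : MarkovShift a | ∀ A : Set (MarkovShift a), IsOpen A → A.Nonempty → η z A = ∞} := by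
  obtain ⟨N, hN, ⟨B⟩⟩ := haper.exists_uniformBridge
  obtain ⟨b, c, hbc⟩ := exists_pair_ne S
  obtain ⟨G, hG, hGwild⟩ := exists_seq_isOpen_dense_iInter_subset
    (MarkovShift.setOf_forall_nuFun_eq_top_mem_residual hN B hbc)
  exact ⟨G, hG, fun z hz A hA hne => (hη z A hA.measurableSet).trans (hGwild hz A hA hne)⟩
end

section
/- For every compact set K⊆𝕏 one has η(K)=0 if and only if lim_{ε→0} τ(B_ε(K))=0. -/
open MeasureTheory Filter Set Topology
open scoped ENNReal

/-- A finitely additive outer probability on `X`: a monotone, finitely subadditive set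
function defined on all subsets of `X`, with values in `[0,1]` and total mass `1`. -/
structure FinAddOuterProb (X : Type*) where
  toFun : Set X → ℝ≥0∞
  mono' : ∀ ⦃A B : Set X⦄, A ⊆ B → toFun A ≤ toFun B
  subadd' : ∀ A B : Set X, toFun (A ∪ B) ≤ toFun A + toFun B
  le_one' : ∀ A : Set X, toFun A ≤ 1
  univ_eq' : toFun Set.univ = 1

/-- The premeasure `τ(A) = limsup_n (1/n) ∑_{j<n} ξ_j(A)`. -/
noncomputable def tauSeq {X : Type*} (ξ : ℕ → FinAddOuterProb X) (A : Set X) : ℝ≥0∞ :=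
  Filter.atTop.limsup fun n : ℕ => (∑ j ∈ Finset.range n, (ξ j).toFun A) / (n : ℝ≥0∞)

/-- `ν_r(Y)`: infimum of `∑_i τ(I_i)` over countable covers of `Y` by open sets of
diameter at most `r`. -/
noncomputable def nuSeqAux {X : Type*} [MetricSpace X] (ξ : ℕ → FinAddOuterProb X) (r : ℝ)
    (Y : Set X) : ℝ≥0∞ :=
  ⨅ (I : ℕ → Set X) (_ : Y ⊆ ⋃ n, I n) (_ : ∀ n, IsOpen (I n))
    (_ : ∀ n, EMetric.diam (I n) ≤ ENNReal.ofReal r), ∑' n, tauSeq ξ (I n)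

/-- `ν(Y) = sup_{r>0} ν_r(Y)`, the Carathéodory Method II construction from `τ`. -/
noncomputable def nuSeq {X : Type*} [MetricSpace X] (ξ : ℕ → FinAddOuterProb X)
    (Y : Set X) : ℝ≥0∞ :=
  ⨆ (r : ℝ) (_ : 0 < r), nuSeqAux ξ r Y

/-!
If `η(K) = 0`, a cover of `K` with small `∑ τ(I_n)` has a finite subcover, whose union contains
some `B_ε(K)`; finite subadditivity of `τ` bounds `τ(B_ε(K))`. Conversely, if
`τ(B_ε(K)) → 0`, cover `K` by countably many open sets `B_n` of diameter `≤ r` and shrink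
them to `B_n ∩ B_{ε_n}(K)` with `τ(B_{ε_n}(K)) ≤ w_n`, where `∑ w_n < δ`; this gives
`ν_r(K) ≤ δ` for every `r, δ > 0`.
-/

/-- Unlike `ENNReal.limsup_add_le`, this holds for every filter, e.g. `atTop` on `ℕ`. -/
lemma ENNReal.limsup_add_le_limsup_add_limsup {α : Type*} (f : Filter α) (u v : α → ℝ≥0∞) :
    f.limsup (u + v) ≤ f.limsup u + f.limsup v := by
  refine ENNReal.le_of_forall_pos_le_add fun ε hε hlt => ?_
  obtain ⟨hu, hv⟩ := ENNReal.add_lt_top.1 hlt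
  have hε2 : (ε / 2 : ℝ≥0∞) ≠ 0 := (ENNReal.half_pos (by exact_mod_cast hε.ne')).ne'
  have hu' := eventually_lt_of_limsup_lt (ENNReal.lt_add_right hu.ne hε2)
  have hv' := eventually_lt_of_limsup_lt (ENNReal.lt_add_right hv.ne hε2)
  calc f.limsup (u + v) ≤ (f.limsup u + ε / 2) + (f.limsup v + ε / 2) :=
        limsup_le_of_le isCobounded_le_of_bot
          (by filter_upwards [hu', hv'] with n h1 h2 using add_le_add h1.le h2.le)
    _ = f.limsup u + f.limsup v + ε := by rw [add_add_add_comm, ENNReal.add_halves]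

section tauSeq

variable {X : Type*} (ξ : ℕ → FinAddOuterProb X)

lemma tauSeq_mono {A B : Set X} (h : A ⊆ B) : tauSeq ξ A ≤ tauSeq ξ B :=
  limsup_le_limsup (.of_forall fun _ =>
    ENNReal.div_le_div_right (Finset.sum_le_sum fun j _ => (ξ j).mono' h) _)

lemma tauSeq_union_le (A B : Set X) : tauSeq ξ (A ∪ B) ≤ tauSeq ξ A + tauSeq ξ B := by
  refine (limsup_le_limsup (.of_forall fun n => ?_)).trans (ENNReal.limsup_add_le_limsup_add_limsup _ _ _)
  rw [Pi.add_apply, ← ENNReal.add_div, ← Finset.sum_add_distrib]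
  exact ENNReal.div_le_div_right (Finset.sum_le_sum fun j _ => (ξ j).subadd' A B) _

lemma tauSeq_biUnion_le {ι : Type*} {s : Finset ι} (hs : s.Nonempty) (f : ι → Set X) :
    tauSeq ξ (⋃ i ∈ s, f i) ≤ ∑ i ∈ s, tauSeq ξ (f i) := by
  classical
  induction hs using Finset.Nonempty.cons_induction with
  | singleton i => simp
  | cons i s hi _ ih =>
    rw [Finset.sum_cons, Finset.cons_eq_insert, Finset.set_biUnion_insert]
    exact (tauSeq_union_le ξ _ _).trans (add_le_add_right ih _)

end tauSeq

section nuSeq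

variable {X : Type*} [MetricSpace X] (ξ : ℕ → FinAddOuterProb X)

lemma nuSeqAux_le_tsum {r : ℝ} {Y : Set X} {I : ℕ → Set X} (hcov : Y ⊆ ⋃ n, I n)
    (hopen : ∀ n, IsOpen (I n)) (hdiam : ∀ n, Metric.ediam (I n) ≤ ENNReal.ofReal r) :
    nuSeqAux ξ r Y ≤ ∑' n, tauSeq ξ (I n) :=
  iInf₂_le_of_le I hcov (iInf₂_le_of_le hopen hdiam le_rfl)

lemma exists_cover_tsum_lt_of_nuSeqAux_lt {r : ℝ} {Y : Set X} {δ : ℝ≥0∞}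
    (h : nuSeqAux ξ r Y < δ) :
    ∃ I : ℕ → Set X, Y ⊆ ⋃ n, I n ∧ (∀ n, IsOpen (I n)) ∧
      (∀ n, Metric.ediam (I n) ≤ ENNReal.ofReal r) ∧ ∑' n, tauSeq ξ (I n) < δ := by
  simp only [nuSeqAux, iInf_lt_iff, exists_prop] at h
  exact h

lemma nuSeq_eq_zero_iff {Y : Set X} : nuSeq ξ Y = 0 ↔ ∀ r, 0 < r → nuSeqAux ξ r Y = 0 := by
  simp only [nuSeq, ENNReal.iSup_eq_zero]

end nuSeq

lemma IsCompact.exists_nat_open_cover_ediam_le {X : Type*} [PseudoMetricSpace X] {K : Set X}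
    (hK : IsCompact K) {r : ℝ} (hr : 0 < r) :
    ∃ B : ℕ → Set X, K ⊆ ⋃ n, B n ∧ (∀ n, IsOpen (B n)) ∧
      ∀ n, Metric.ediam (B n) ≤ ENNReal.ofReal r := by
  obtain ⟨t, -, ht, hcov⟩ := hK.finite_cover_balls (half_pos hr)
  -- `∅` is added so that the family is nonempty and can be enumerated by `ℕ`
  obtain ⟨B, hB⟩ := ((ht.image fun x => Metric.ball x (r / 2)).countable.insert ∅).exists_eq_range
    (insert_nonempty _ _)
  have hmem : ∀ n, B n = ∅ ∨ ∃ x, B n = Metric.ball x (r / 2) := fun n => by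
    have : B n ∈ range B := mem_range_self n
    rw [← hB] at this
    obtain h | ⟨x, -, hx⟩ := this
    exacts [.inl h, .inr ⟨x, hx.symm⟩]
  refine ⟨B, ?_, fun n => ?_, fun n => ?_⟩
  · rw [← sUnion_range, ← hB, sUnion_insert, sUnion_image, empty_union]
    exact hcov
  · obtain h | ⟨x, h⟩ := hmem n <;> rw [h]
    exacts [isOpen_empty, Metric.isOpen_ball]
  · obtain h | ⟨x, h⟩ := hmem n <;> rw [h]
    · exact Metric.ediam_empty.trans_le bot_le
    · calc Metric.ediam (Metric.ball x (r / 2)) ≤ 2 * ENNReal.ofReal (r / 2) := by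
            rw [← Metric.eball_ofReal]
            exact Metric.ediam_eball_le
        _ = ENNReal.ofReal r := by
            rw [← ENNReal.ofReal_ofNat 2, ← ENNReal.ofReal_mul zero_le_two]
            ring_nf

section compact

variable {X : Type*} [MetricSpace X] (ξ : ℕ → FinAddOuterProb X) {K : Set X}

lemma tendsto_tauSeq_thickening_of_nuSeqAux_eq_zero (hK : IsCompact K) {r : ℝ}
    (h : nuSeqAux ξ r K = 0) :
    Tendsto (fun ε : ℝ => tauSeq ξ (Metric.thickening ε K)) (𝓝[>] 0) (𝓝 0) := by
  refine ENNReal.tendsto_nhds_zero.2 fun δ hδ => ?_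
  obtain ⟨I, hcov, hopen, -, hsum⟩ := exists_cover_tsum_lt_of_nuSeqAux_lt ξ (h ▸ hδ)
  obtain ⟨t, ht⟩ := hK.elim_finite_subcover I hopen hcov
  -- `insert 0` makes the index set nonempty, as `τ(∅)` need not vanish
  have hsub : K ⊆ ⋃ i ∈ insert 0 t, I i :=
    ht.trans (biUnion_subset_biUnion_left (Finset.coe_subset.2 (Finset.subset_insert 0 t)))
  obtain ⟨ε₀, hε₀, hthick⟩ :=
    hK.exists_thickening_subset_open (isOpen_biUnion fun i _ => hopen i) hsub
  filter_upwards [Ioo_mem_nhdsGT hε₀] with ε hε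
  calc tauSeq ξ (Metric.thickening ε K)
      ≤ tauSeq ξ (⋃ i ∈ insert 0 t, I i) :=
        tauSeq_mono ξ ((Metric.thickening_mono hε.2.le K).trans hthick)
    _ ≤ ∑ i ∈ insert 0 t, tauSeq ξ (I i) := tauSeq_biUnion_le ξ (Finset.insert_nonempty 0 t) I
    _ ≤ ∑' n, tauSeq ξ (I n) := ENNReal.sum_le_tsum _
    _ ≤ δ := hsum.le

lemma nuSeqAux_eq_zero_of_tendsto_tauSeq_thickening (hK : IsCompact K) {r : ℝ} (hr : 0 < r)
    (h : Tendsto (fun ε : ℝ => tauSeq ξ (Metric.thickening ε K)) (𝓝[>] 0) (𝓝 0)) :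
    nuSeqAux ξ r K = 0 := by
  obtain ⟨B, hcov, hopen, hdiam⟩ := hK.exists_nat_open_cover_ediam_le hr
  refine le_antisymm (le_of_forall_gt_imp_ge_of_dense fun δ hδ => ?_) bot_le
  obtain ⟨w, hw, hwδ⟩ := ENNReal.exists_pos_sum_of_countable' hδ.ne' ℕ
  have hsmall : ∀ n, ∃ ε, 0 < ε ∧ tauSeq ξ (Metric.thickening ε K) ≤ w n := fun n =>
    let ⟨ε, hτ, hε⟩ := ((ENNReal.tendsto_nhds_zero.1 h _ (hw n)).and self_mem_nhdsWithin).exists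
    ⟨ε, hε, hτ⟩
  choose e he hτ using hsmall
  calc nuSeqAux ξ r K ≤ ∑' n, tauSeq ξ (B n ∩ Metric.thickening (e n) K) := by
        refine nuSeqAux_le_tsum ξ (fun x hx => ?_)
          (fun n => (hopen n).inter Metric.isOpen_thickening)
          (fun n => (Metric.ediam_mono inter_subset_left).trans (hdiam n))
        obtain ⟨n, hn⟩ := mem_iUnion.1 (hcov hx)
        exact mem_iUnion.2 ⟨n, hn, Metric.self_subset_thickening (he n) K hx⟩
    _ ≤ ∑' n, w n := ENNReal.tsum_le_tsum fun n => (tauSeq_mono ξ inter_subset_right).trans (hτ n)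
    _ ≤ δ := hwδ.le

lemma nuSeq_eq_zero_iff_tendsto_tauSeq_thickening (hK : IsCompact K) :
    nuSeq ξ K = 0 ↔
      Tendsto (fun ε : ℝ => tauSeq ξ (Metric.thickening ε K)) (𝓝[>] 0) (𝓝 0) := by
  rw [nuSeq_eq_zero_iff]
  exact ⟨fun h => tendsto_tauSeq_thickening_of_nuSeqAux_eq_zero ξ hK (h 1 one_pos),
    fun h _ hr => nuSeqAux_eq_zero_of_tendsto_tauSeq_thickening ξ hK hr h⟩

end compact

/-- For every compact set `K ⊆ 𝕏`, one has `η(K) = 0` if and only if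
`lim_{ε→0} τ(B_ε(K)) = 0`. -/
theorem eta_compact_zero_iff
    {X : Type*} [MetricSpace X] [MeasurableSpace X] [BorelSpace X]
    (ξ : ℕ → FinAddOuterProb X)
    (η : Measure X) (hη : ∀ E : Set X, MeasurableSet E → η E = nuSeq ξ E)
    (K : Set X) (hK : IsCompact K) :
    η K = 0 ↔
      Filter.Tendsto (fun ε : ℝ => tauSeq ξ (Metric.thickening ε K))
        (nhdsWithin 0 (Set.Ioi 0)) (nhds 0) := by
  rw [hη K hK.isClosed.measurableSet]
  exact nuSeq_eq_zero_iff_tendsto_tauSeq_thickening ξ hK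
end

section
/- Let 𝕏 be a compact metric space. If A⊆𝕏 is an open set with η(∂A)=0, then τ(cl(A))≤η(A), where cl(A) denotes the closure of A and ∂A its topological boundary. -/
/-!
Since `τ` is monotone and finitely subadditive, compactness of `cl(A)` lets any open cover of
`cl(A)` be replaced by a finite subcover, so `τ(cl(A)) ≤ ν_r(cl(A)) ≤ ν(cl(A)) = η(cl(A))`.
Finally `cl(A) = int(A) ∪ ∂A` and `η(∂A) = 0` give `η(cl(A)) ≤ η(A)`.
-/

open MeasureTheory Filter Set Topology
open scoped ENNReal

lemma ENNReal.limsup_add_le' {ι : Type*} {f : Filter ι} (u v : ι → ℝ≥0∞) :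
    limsup (u + v) f ≤ limsup u f + limsup v f := by
  refine le_of_forall_gt fun c hc ↦ ?_
  obtain ⟨a, ha, b, hb, hab⟩ := ENNReal.exists_add_lt_of_add_lt hc
  refine lt_of_le_of_lt (limsup_le_of_le (by isBoundedDefault) ?_) hab
  filter_upwards [eventually_lt_of_limsup_lt ha, eventually_lt_of_limsup_lt hb] with x hu hv
  exact add_le_add hu.le hv.le

lemma measure_closure_le_of_null_frontier {α : Type*} [TopologicalSpace α] [MeasurableSpace α]
    {μ : Measure α} {s : Set α} (h : μ (frontier s) = 0) : μ (closure s) ≤ μ s :=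
  calc μ (closure s) = μ (interior s ∪ frontier s) := by rw [closure_eq_interior_union_frontier]
    _ ≤ μ (interior s) + μ (frontier s) := measure_union_le _ _
    _ ≤ μ s := by rw [h, add_zero]; exact measure_mono interior_subset

section

variable {X : Type*} (ξ : ℕ → FinAddOuterProb X)

lemma tauSeq_biUnion_le_sum {ι : Type*} {s : Finset ι} (hs : s.Nonempty) (I : ι → Set X) :
    tauSeq ξ (⋃ i ∈ s, I i) ≤ ∑ i ∈ s, tauSeq ξ (I i) := by
  classical
  induction hs using Finset.Nonempty.cons_induction with
  | singleton => simp
  | cons a s _ _ ih =>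
    rw [Finset.sum_cons, Finset.cons_eq_insert, Finset.set_biUnion_insert]
    exact (tauSeq_union_le ξ _ _).trans (add_le_add le_rfl ih)

variable [MetricSpace X]

lemma tauSeq_le_nuSeqAux_of_isCompact {K : Set X} (hK : IsCompact K) (r : ℝ) :
    tauSeq ξ K ≤ nuSeqAux ξ r K := by
  refine le_iInf fun I ↦ le_iInf fun hcover ↦ le_iInf fun hopen ↦ le_iInf fun _ ↦ ?_
  obtain ⟨t, ht⟩ := hK.elim_finite_subcover I hopen hcover
  -- `τ(∅)` need not vanish, so the subcover is made nonempty before applying subadditivity.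
  calc tauSeq ξ K ≤ tauSeq ξ (⋃ i ∈ insert 0 t, I i) :=
        tauSeq_mono ξ (ht.trans (biUnion_subset_biUnion_left (Finset.subset_insert 0 t)))
    _ ≤ ∑ i ∈ insert 0 t, tauSeq ξ (I i) := tauSeq_biUnion_le_sum ξ (Finset.insert_nonempty 0 t) I
    _ ≤ ∑' n, tauSeq ξ (I n) := ENNReal.sum_le_tsum _

lemma nuSeqAux_le_nuSeq {r : ℝ} (hr : 0 < r) (Y : Set X) : nuSeqAux ξ r Y ≤ nuSeq ξ Y :=
  le_iSup₂_of_le r hr le_rfl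

end

theorem tau_closure_le_eta_general
    {X : Type*} [MetricSpace X] [CompactSpace X] [MeasurableSpace X] [BorelSpace X]
    (ξ : ℕ → FinAddOuterProb X)
    (η : Measure X) (hη : ∀ E : Set X, MeasurableSet E → η E = nuSeq ξ E)
    (A : Set X) (hbd : η (frontier A) = 0) :
    tauSeq ξ (closure A) ≤ η A :=
  calc tauSeq ξ (closure A) ≤ nuSeqAux ξ 1 (closure A) :=
        tauSeq_le_nuSeqAux_of_isCompact ξ isClosed_closure.isCompact 1
    _ ≤ nuSeq ξ (closure A) := nuSeqAux_le_nuSeq ξ one_pos _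
    _ = η (closure A) := (hη _ isClosed_closure.measurableSet).symm
    _ ≤ η A := measure_closure_le_of_null_frontier hbd

/-- Let `𝕏` be a compact metric space. If `A ⊆ 𝕏` is open with `η(∂A) = 0`, then
`τ(cl(A)) ≤ η(A)`. -/
theorem tau_closure_le_eta
    {X : Type*} [MetricSpace X] [CompactSpace X] [MeasurableSpace X] [BorelSpace X]
    (ξ : ℕ → FinAddOuterProb X)
    (η : Measure X) (hη : ∀ E : Set X, MeasurableSet E → η E = nuSeq ξ E)
    (A : Set X) (hA : IsOpen A) (hbd : η (frontier A) = 0) :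
    tauSeq ξ (closure A) ≤ η A :=
  tau_closure_le_eta_general ξ η hη A hbd
end

section
/- Let 𝕏 be a perfect compact metric space and f:𝕏→𝕏 a continuous map. If for some x∈𝕏 the measure η_x is purely atomic with finitely many atoms, then every atom P of η_x is a preperiodic point of f: there exist integers m>n≥0 with f^m(P)=f^n(P). If in addition f is a bijection, then every atom of η_x is a periodic point of f. -/
open MeasureTheory Filter Set Topology
open scoped ENNReal

/-!
An atom `P` of `η_x` forces every neighbourhood of `P` to be visited by the orbit of `x` with
upper frequency `τ_x` at least `η_x {P}`. As `τ_x (f^[j] ⁻¹' A) ≤ τ_x A` and `f^[j]` is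
continuous, the same holds for every neighbourhood of `f^[j] P`; for a compact neighbourhood `K`
a finite subcover gives `τ_x K ≤ η_x K`. Hence every `f^[j] P` lies in the finite closed conull
set `F`, so the orbit of `P` repeats itself, and injectivity of `f` makes `P` periodic.
-/

open scoped NNReal

namespace ENNReal

variable {ι : Type*} {l : Filter ι}

theorem limsup_add_le_add_limsup (u v : ι → ℝ≥0∞) :
    l.limsup (u + v) ≤ l.limsup u + l.limsup v := by
  refine le_of_forall_pos_le_add fun ε hε hfin => ?_
  obtain ⟨hu, hv⟩ := add_lt_top.mp hfin
  have hε2 : ((ε / 2 : ℝ≥0) : ℝ≥0∞) ≠ 0 := by simpa using hε.ne'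
  refine limsup_le_of_le (by isBoundedDefault) ?_
  filter_upwards [eventually_lt_of_limsup_lt (lt_add_right hu.ne hε2),
    eventually_lt_of_limsup_lt (lt_add_right hv.ne hε2)] with i hui hvi
  calc u i + v i ≤ (l.limsup u + (ε / 2 : ℝ≥0)) + (l.limsup v + (ε / 2 : ℝ≥0)) :=
        add_le_add hui.le hvi.le
    _ = l.limsup u + l.limsup v + ε := by
        rw [add_add_add_comm, ← coe_add, add_halves]

theorem limsup_finset_sum_le {κ : Type*} (s : Finset κ) (u : κ → ι → ℝ≥0∞) :
    l.limsup (fun i => ∑ k ∈ s, u k i) ≤ ∑ k ∈ s, l.limsup (u k) := by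
  classical
  induction s using Finset.induction_on with
  | empty =>
    simp only [Finset.sum_empty]
    exact limsup_const_bot.le
  | insert k s hk ih =>
    simp only [Finset.sum_insert hk]
    exact (limsup_add_le_add_limsup (u k) fun i => ∑ k ∈ s, u k i).trans (add_le_add le_rfl ih)

end ENNReal

theorem Finset.sum_range_shift_le {u : ℕ → ℝ≥0∞} (hu : ∀ j, u j ≤ 1) (n k : ℕ) :
    ∑ j ∈ Finset.range n, u (k + j) ≤ ∑ j ∈ Finset.range n, u j + k :=
  calc ∑ j ∈ Finset.range n, u (k + j)
      ≤ ∑ j ∈ Finset.range k, u j + ∑ j ∈ Finset.range n, u (k + j) := le_add_self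
    _ = ∑ j ∈ Finset.range n, u j + ∑ j ∈ Finset.range k, u (n + j) := by
      rw [← Finset.sum_range_add, add_comm k n, Finset.sum_range_add]
    _ ≤ ∑ j ∈ Finset.range n, u j + k := by
      gcongr
      exact (Finset.sum_le_card_nsmul _ _ 1 fun j _ => hu (n + j)).trans (by simp)

section tauOrbit

variable {X : Type*} (f : X → X) (x : X)

theorem tauOrbit_mono {A B : Set X} (h : A ⊆ B) : tauOrbit f x A ≤ tauOrbit f x B :=
  limsup_le_limsup <| .of_forall fun _ =>
    ENNReal.div_le_div_right (Finset.sum_le_sum fun _ _ =>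
      indicator_le_indicator_of_subset h (fun _ => zero_le) _) _

@[simp]
theorem tauOrbit_empty : tauOrbit f x ∅ = 0 := by
  simp [tauOrbit]

theorem tauOrbit_le_sum_of_subset_biUnion {ι : Type*} {s : Finset ι} {A : Set X}
    {I : ι → Set X} (hA : A ⊆ ⋃ i ∈ s, I i) :
    tauOrbit f x A ≤ ∑ i ∈ s, tauOrbit f x (I i) := by
  have hind (y : X) : A.indicator (fun _ => (1 : ℝ≥0∞)) y
      ≤ ∑ i ∈ s, (I i).indicator (fun _ => 1) y := by
    by_cases hy : y ∈ A
    · obtain ⟨i, hi, hyi⟩ : ∃ i ∈ s, y ∈ I i := by simpa using hA hy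
      rw [indicator_of_mem hy]
      exact (indicator_of_mem hyi _).symm.le.trans
        (Finset.single_le_sum (f := fun i => (I i).indicator (fun _ => (1 : ℝ≥0∞)) y)
          (fun _ _ => zero_le) hi)
    · simp [indicator_of_notMem hy]
  refine (limsup_le_limsup (.of_forall fun n => ?_)).trans (ENNReal.limsup_finset_sum_le s _)
  calc (∑ j ∈ Finset.range n, A.indicator (fun _ => (1 : ℝ≥0∞)) (f^[j] x)) / (n : ℝ≥0∞)
      ≤ (∑ j ∈ Finset.range n, ∑ i ∈ s, (I i).indicator (fun _ => 1) (f^[j] x)) / n :=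
        ENNReal.div_le_div_right (Finset.sum_le_sum fun j _ => hind _) _
    _ = ∑ i ∈ s, (∑ j ∈ Finset.range n, (I i).indicator (fun _ => (1 : ℝ≥0∞)) (f^[j] x)) /
          (n : ℝ≥0∞) := by
        simp only [Finset.sum_comm (s := s), div_eq_mul_inv, Finset.sum_mul]

/-- Visits of the orbit to `(f^[k])⁻¹' A` before time `n` are visits to `A` in `[k, k + n)`,
so the two frequencies differ by at most `k / n`. -/
theorem tauOrbit_preimage_iterate_le (A : Set X) (k : ℕ) :
    tauOrbit f x (f^[k] ⁻¹' A) ≤ tauOrbit f x A := by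
  set u : ℕ → ℝ≥0∞ := fun j => A.indicator (fun _ => (1 : ℝ≥0∞)) (f^[j] x)
  have hshift (j : ℕ) :
      (f^[k] ⁻¹' A).indicator (fun _ => (1 : ℝ≥0∞)) (f^[j] x) = u (k + j) := by
    by_cases h : f^[k] (f^[j] x) ∈ A <;> simp [u, Function.iterate_add_apply, h]
  have hk : Tendsto (fun n : ℕ => (k : ℝ≥0∞) / n) atTop (𝓝 0) := by
    simpa using ENNReal.Tendsto.const_div ENNReal.tendsto_nat_nhds_top
      (.inr (ENNReal.natCast_ne_top k))
  calc tauOrbit f x (f^[k] ⁻¹' A)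
      ≤ atTop.limsup ((fun n : ℕ => (∑ j ∈ Finset.range n, u j) / n) +
          fun n : ℕ => (k : ℝ≥0∞) / n) :=
        limsup_le_limsup <| .of_forall fun n => by
          simp only [hshift, Pi.add_apply, ← ENNReal.add_div]
          exact ENNReal.div_le_div_right
            (Finset.sum_range_shift_le (u := u) (fun _ => indicator_apply_le fun _ => le_rfl) n k) _
    _ = tauOrbit f x A := ENNReal.limsup_add_of_right_tendsto_zero hk _

end tauOrbit

section nuFun

variable {X : Type*} [MetricSpace X] (f : X → X) (x : X)

theorem nuAux_le_tauOrbit {r : ℝ} {Y U : Set X} (hU : IsOpen U) (hYU : Y ⊆ U)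
    (hdiam : Metric.ediam U ≤ ENNReal.ofReal r) : nuAux f x r Y ≤ tauOrbit f x U := by
  classical
  let I : ℕ → Set X := fun n => if n = 0 then U else ∅
  have hcover : Y ⊆ ⋃ n, I n := hYU.trans (subset_iUnion I 0)
  have hopen (n : ℕ) : IsOpen (I n) := by
    by_cases hn : n = 0 <;> simp [I, hn, hU]
  have hdiamI (n : ℕ) : Metric.ediam (I n) ≤ ENNReal.ofReal r := by
    by_cases hn : n = 0 <;> simp [I, hn, hdiam, Metric.ediam_empty]
  calc nuAux f x r Y ≤ ∑' n, tauOrbit f x (I n) :=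
        iInf₂_le_of_le I hcover <| iInf₂_le_of_le hopen hdiamI le_rfl
    _ = tauOrbit f x U := by
        rw [tsum_eq_single 0 fun n hn => by simp [I, hn]]
        simp [I]

theorem nuFun_singleton_le_tauOrbit {P : X} {U : Set X} (hU : U ∈ 𝓝 P) :
    nuFun f x {P} ≤ tauOrbit f x U := by
  obtain ⟨ε, hε, hball⟩ := Metric.mem_nhds_iff.mp hU
  refine iSup₂_le fun r hr => ?_
  set s := min ε (r / 2)
  have hs : 0 < s := lt_min hε (half_pos hr)
  refine (nuAux_le_tauOrbit f x Metric.isOpen_ball (singleton_subset_iff.mpr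
    (Metric.mem_ball_self hs)) ?_).trans (tauOrbit_mono f x ((Metric.ball_subset_ball
      (min_le_left _ _)).trans hball))
  calc Metric.ediam (Metric.ball P s) ≤ 2 * ENNReal.ofReal s := by
        rw [← Metric.eball_ofReal]; exact Metric.ediam_eball_le
    _ = ENNReal.ofReal (2 * s) := by rw [ENNReal.ofReal_mul zero_le_two, ENNReal.ofReal_ofNat]
    _ ≤ ENNReal.ofReal r := ENNReal.ofReal_le_ofReal (by linarith [min_le_right ε (r / 2)])

/-- `τ_x` is only finitely subadditive; compactness reduces the countable covers in `ν` to
finite ones. -/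
theorem tauOrbit_le_nuFun_of_isCompact {K : Set X} (hK : IsCompact K) :
    tauOrbit f x K ≤ nuFun f x K := by
  refine le_iSup₂_of_le 1 one_pos <| le_iInf₂ fun I hcover => le_iInf₂ fun hopen _ => ?_
  obtain ⟨s, hs⟩ := hK.elim_finite_subcover I hopen hcover
  exact (tauOrbit_le_sum_of_subset_biUnion f x hs).trans (ENNReal.sum_le_tsum s)

theorem nuFun_singleton_le_nuFun_of_mem_nhds_iterate {f : X → X} (hf : Continuous f) (x : X)
    {P : X} {j : ℕ} {K : Set X} (hK : IsCompact K) (hKP : K ∈ 𝓝 (f^[j] P)) :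
    nuFun f x {P} ≤ nuFun f x K :=
  calc nuFun f x {P} ≤ tauOrbit f x (f^[j] ⁻¹' K) :=
        nuFun_singleton_le_tauOrbit f x ((hf.iterate j).continuousAt.preimage_mem_nhds hKP)
    _ ≤ tauOrbit f x K := tauOrbit_preimage_iterate_le f x K j
    _ ≤ nuFun f x K := tauOrbit_le_nuFun_of_isCompact f x hK

theorem iterate_mem_of_measure_compl_eq_zero [MeasurableSpace X] [BorelSpace X]
    [LocallyCompactSpace X] {f : X → X} (hf : Continuous f) {x : X} {μ : Measure X}
    (hμ : ∀ E, MeasurableSet E → μ E = nuFun f x E) {S : Set X} (hS : IsClosed S)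
    (hSμ : μ Sᶜ = 0) {P : X} (hP : 0 < μ {P}) (j : ℕ) : f^[j] P ∈ S := by
  by_contra hQ
  obtain ⟨K, hK, hQK, hKS⟩ := exists_compact_subset hS.isOpen_compl hQ
  have : μ {P} ≤ μ K := by
    rw [hμ _ (measurableSet_singleton P), hμ _ hK.measurableSet]
    exact nuFun_singleton_le_nuFun_of_mem_nhds_iterate hf x hK
      (mem_interior_iff_mem_nhds.mp hQK)
  exact hP.not_ge (this.trans ((measure_mono hKS).trans hSμ.le))

end nuFun

theorem atoms_preperiodic_general
    {X : Type*} [MetricSpace X] [CompactSpace X] [MeasurableSpace X] [BorelSpace X]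
    (f : X → X) (hf : Continuous f) (x : X)
    (η : X → Measure X) (hη : ∀ y : X, ∀ E : Set X, MeasurableSet E → η y E = nuFun f y E)
    (hatomic : ∃ F : Finset X, (∀ P ∈ F, 0 < η x {P}) ∧ η x (Set.univ \ (F : Set X)) = 0) :
    (∀ P : X, 0 < η x {P} → ∃ m n : ℕ, n < m ∧ f^[m] P = f^[n] P) ∧
      (Function.Bijective f →
        ∀ P : X, 0 < η x {P} → ∃ k : ℕ, 1 ≤ k ∧ f^[k] P = P) := by
  obtain ⟨F, -, hnull⟩ := hatomic
  have hpre (P : X) (hP : 0 < η x {P}) : ∃ m n : ℕ, n < m ∧ f^[m] P = f^[n] P := by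
    have horbit (j : ℕ) : f^[j] P ∈ (F : Set X) :=
      iterate_mem_of_measure_compl_eq_zero hf (hη x) F.finite_toSet.isClosed
        (by rwa [compl_eq_univ_sdiff]) hP j
    obtain ⟨n, m, hnm, heq⟩ := F.finite_toSet.exists_lt_map_eq_of_forall_mem horbit
    exact ⟨m, n, hnm, heq.symm⟩
  refine ⟨hpre, fun hbij P hP => ?_⟩
  obtain ⟨m, n, hnm, heq⟩ := hpre P hP
  exact ⟨m - n, by omega, Function.iterate_cancel hbij.injective heq⟩

/-- Let `𝕏` be a perfect compact metric space and `f : 𝕏 → 𝕏` continuous. If for some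
`x ∈ 𝕏` the measure `η_x` is purely atomic with finitely many atoms (there is a finite set
`F` of atoms with `η_x(𝕏 ∖ F) = 0`), then every atom `P` of `η_x` is preperiodic for `f`;
if moreover `f` is a bijection, then every atom of `η_x` is periodic for `f`. -/
theorem atoms_preperiodic
    {X : Type*} [MetricSpace X] [CompactSpace X] [MeasurableSpace X] [BorelSpace X]
    (hperf : Perfect (Set.univ : Set X))
    (f : X → X) (hf : Continuous f) (x : X)
    (η : X → Measure X) (hη : ∀ y : X, ∀ E : Set X, MeasurableSet E → η y E = nuFun f y E)
    (hatomic : ∃ F : Finset X, (∀ P ∈ F, 0 < η x {P}) ∧ η x (Set.univ \ (F : Set X)) = 0) :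
    (∀ P : X, 0 < η x {P} → ∃ m n : ℕ, n < m ∧ f^[m] P = f^[n] P) ∧
      (Function.Bijective f →
        ∀ P : X, 0 < η x {P} → ∃ k : ℕ, 1 ≤ k ∧ f^[k] P = P) :=
  atoms_preperiodic_general f hf x η hη hatomic
end
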